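/- arXiv:math/0604389 — 8 statements merged into one kernel-verified Lean document; each statement's English description precedes it below -/
import Mathlib

section
/- Let s be a real number and C = {(x,y) ∈ ℝ² : x ≥ 0 and y ≤ s·x}. If σ : (-ε, ε) → ℝ² is a parameterized curve differentiable at t = 0 with σ(0) = (0,0) and σ(t) ∈ C for all t, then σ'(0) = (0,0). -/
theorem stmt_0 (s ε : ℝ) (hε : 0 < ε) (σ : ℝ → ℝ × ℝ) (v : ℝ × ℝ)
    (hd : HasDerivAt σ v 0) (h0 : σ 0 = (0, 0))
    (hC : ∀ t ∈ Set.Ioo (-ε) ε, 0 ≤ (σ t).1 ∧ (σ t).2 ≤ s * (σ t).1) :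
    v = (0, 0) := by
  have hmem : Set.Ioo (-ε) ε ∈ nhds (0 : ℝ) :=
    Ioo_mem_nhds (by linarith) hε
  have hd1 : HasDerivAt (fun t => (σ t).1) v.1 0 :=
    (ContinuousLinearMap.fst ℝ ℝ ℝ).hasFDerivAt.comp_hasDerivAt 0 hd
  have hd2' : HasDerivAt (fun t => (σ t).2) v.2 0 :=
    (ContinuousLinearMap.snd ℝ ℝ ℝ).hasFDerivAt.comp_hasDerivAt 0 hd
  have hd2 : HasDerivAt (fun t => (σ t).2 - s * (σ t).1) (v.2 - s * v.1) 0 :=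
    hd2'.sub (hd1.const_mul s)
  have hmin : IsLocalMin (fun t => (σ t).1) 0 := by
    filter_upwards [hmem] with t ht
    simpa [h0] using (hC t ht).1
  have hmax : IsLocalMax (fun t => (σ t).2 - s * (σ t).1) 0 := by
    filter_upwards [hmem] with t ht
    have := (hC t ht).2
    simp [h0]; linarith
  have h1 : v.1 = 0 := hmin.hasDerivAt_eq_zero hd1
  have h2 : v.2 - s * v.1 = 0 := hmax.hasDerivAt_eq_zero hd2
  have : v.2 = 0 := by rw [h1] at h2; linarith
  exact Prod.ext h1 this
end

section
/- Let s ∈ ℝ and C = {(x,y) ∈ ℝ² : x ≥ 0 and y ≤ s·x}. If Γ ⊆ ℝ² contains (0,0), is contained in C, and is a 1-dimensional topological submanifold of ℝ², then Γ is not a differentiable (C¹) 1-dimensional submanifold of ℝ² at the point (0,0). -/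
/-- `Γ` is a 1-dimensional topological submanifold of `ℝ²`: around each of its points
there is a local homeomorphism of `ℝ²` sending `Γ` onto the horizontal axis. -/
def IsTopSubmanifold1D (Γ : Set (ℝ × ℝ)) : Prop :=
  ∀ z ∈ Γ, ∃ e : PartialHomeomorph (ℝ × ℝ) (ℝ × ℝ),
    z ∈ e.source ∧ e '' (e.source ∩ Γ) = e.target ∩ {p : ℝ × ℝ | p.2 = 0}

/-!
A differentiable chart `Φ` at the origin would turn `t ↦ Ψ (t, 0)` into a differentiable curve
in `Γ` through the origin. Since the half-cone has a corner at the origin, such a curve has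
`x ≥ 0` and `s x - y ≥ 0` with equality at `t = 0`; both are local minima, so the velocity
vanishes. But `Ψ` is a local inverse of `Φ`, so its differential is injective and the velocity
`dΨ (1, 0)` cannot vanish.
-/

open Filter Topology Set

def halfCone (s : ℝ) : Set (ℝ × ℝ) := {p | 0 ≤ p.1 ∧ p.2 ≤ s * p.1}

theorem HasDerivAt.eq_zero_of_eventually_mem_halfCone {γ : ℝ → ℝ × ℝ} {v : ℝ × ℝ}
    {t₀ s : ℝ} (hγ : HasDerivAt γ v t₀) (hγ₀ : γ t₀ = 0)
    (hC : ∀ᶠ t in 𝓝 t₀, γ t ∈ halfCone s) : v = 0 := by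
  have hx : HasDerivAt (fun t => (γ t).1) v.1 t₀ :=
    (hasFDerivAt_fst (𝕜 := ℝ) (E := ℝ) (F := ℝ)).comp_hasDerivAt t₀ hγ
  have hy : HasDerivAt (fun t => (γ t).2) v.2 t₀ :=
    (hasFDerivAt_snd (𝕜 := ℝ) (E := ℝ) (F := ℝ)).comp_hasDerivAt t₀ hγ
  have hx_min : IsLocalMin (fun t => (γ t).1) t₀ := by
    filter_upwards [hC] with t ht
    simpa [hγ₀] using ht.1
  have hxy_min : IsLocalMin (fun t => s * (γ t).1 - (γ t).2) t₀ := by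
    filter_upwards [hC] with t ht
    simpa [hγ₀] using ht.2
  have hv₁ : v.1 = 0 := hx_min.hasDerivAt_eq_zero hx
  have hv₂ : s * v.1 - v.2 = 0 := hxy_min.hasDerivAt_eq_zero ((hx.const_mul s).sub hy)
  ext
  · exact hv₁
  · simpa [hv₁] using hv₂

theorem HasFDerivAt.injective_of_eventually_leftInverse {𝕜 E F : Type*}
    [NontriviallyNormedField 𝕜] [NormedAddCommGroup E] [NormedSpace 𝕜 E]
    [NormedAddCommGroup F] [NormedSpace 𝕜 F]
    {Φ : F → E} {Ψ : E → F} {A : F →L[𝕜] E} {B : E →L[𝕜] F} {y : E}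
    (hΨ : HasFDerivAt Ψ B y) (hΦ : HasFDerivAt Φ A (Ψ y)) (hinv : Φ ∘ Ψ =ᶠ[𝓝 y] id) :
    Function.Injective B := by
  have hAB : HasFDerivAt id (A.comp B) y := (hΦ.comp y hΨ).congr_of_eventuallyEq hinv.symm
  have hAB_id : A.comp B = ContinuousLinearMap.id 𝕜 E := hAB.unique (hasFDerivAt_id y)
  exact Function.LeftInverse.injective (g := A) fun v => by
    simpa using ContinuousLinearMap.ext_iff.mp hAB_id v

theorem stmt_1_general (s : ℝ) (Γ : Set (ℝ × ℝ))
    (hΓC : Γ ⊆ {p : ℝ × ℝ | 0 ≤ p.1 ∧ p.2 ≤ s * p.1}) :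
    ¬ ∃ (U V : Set (ℝ × ℝ)) (Φ Ψ : ℝ × ℝ → ℝ × ℝ),
      IsOpen U ∧ IsOpen V ∧ ((0 : ℝ), (0 : ℝ)) ∈ U ∧ ((0 : ℝ), (0 : ℝ)) ∈ V ∧
      ContDiffOn ℝ 1 Φ U ∧ ContDiffOn ℝ 1 Ψ V ∧
      Φ '' U = V ∧ (∀ x ∈ U, Ψ (Φ x) = x) ∧ (∀ y ∈ V, Φ (Ψ y) = y) ∧
      Φ ((0 : ℝ), (0 : ℝ)) = ((0 : ℝ), (0 : ℝ)) ∧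
      Φ '' (U ∩ Γ) = V ∩ {p : ℝ × ℝ | p.2 = 0} := by
  rintro ⟨U, V, Φ, Ψ, hU, hV, h0U, h0V, hΦ, hΨ, -, hΨΦ, hΦΨ, hΦ0, hΦΓ⟩
  simp only [Prod.mk_zero_zero] at h0U h0V hΦ0
  have hΨ0 : Ψ 0 = 0 := by simpa [hΦ0] using hΨΦ _ h0U
  have hΨd : HasFDerivAt Ψ (fderiv ℝ Ψ 0) 0 :=
    ((hΨ.differentiableOn one_ne_zero _ h0V).differentiableAt (hV.mem_nhds h0V)).hasFDerivAt
  have hΦd : HasFDerivAt Φ (fderiv ℝ Φ 0) (Ψ 0) := by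
    rw [hΨ0]
    exact ((hΦ.differentiableOn one_ne_zero _ h0U).differentiableAt (hU.mem_nhds h0U)).hasFDerivAt
  have hline : HasDerivAt (fun t : ℝ => (t, (0 : ℝ))) (1, 0) 0 :=
    (hasDerivAt_id 0).prodMk (hasDerivAt_const 0 0)
  have hγ : HasDerivAt (fun t : ℝ => Ψ (t, 0)) (fderiv ℝ Ψ 0 (1, 0)) 0 :=
    hΨd.comp_hasDerivAt_of_eq 0 hline rfl
  have hΨ_axis : MapsTo Ψ (V ∩ {p | p.2 = 0}) Γ := by
    rw [← hΦΓ]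
    exact (LeftInvOn.mapsTo (fun x hx => hΨΦ x hx.1) (surjOn_image Φ _)).mono_right
      inter_subset_right
  have hγC : ∀ᶠ t in 𝓝 (0 : ℝ), Ψ (t, 0) ∈ halfCone s := by
    filter_upwards [hline.continuousAt.preimage_mem_nhds (hV.mem_nhds h0V)] with t ht
    exact hΓC (hΨ_axis ⟨ht, rfl⟩)
  have hv : fderiv ℝ Ψ 0 (1, 0) = 0 :=
    hγ.eq_zero_of_eventually_mem_halfCone hΨ0 hγC
  have hinj := hΨd.injective_of_eventually_leftInverse hΦd
    (eventually_of_mem (hV.mem_nhds h0V) hΦΨ)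
  exact one_ne_zero congr(Prod.fst $(hinj (hv.trans (map_zero _).symm)))

theorem stmt_1 (s : ℝ) (Γ : Set (ℝ × ℝ))
    (h0 : ((0 : ℝ), (0 : ℝ)) ∈ Γ)
    (hΓC : Γ ⊆ {p : ℝ × ℝ | 0 ≤ p.1 ∧ p.2 ≤ s * p.1})
    (hman : IsTopSubmanifold1D Γ) :
    ¬ ∃ (U V : Set (ℝ × ℝ)) (Φ Ψ : ℝ × ℝ → ℝ × ℝ),
      IsOpen U ∧ IsOpen V ∧ ((0 : ℝ), (0 : ℝ)) ∈ U ∧ ((0 : ℝ), (0 : ℝ)) ∈ V ∧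
      ContDiffOn ℝ 1 Φ U ∧ ContDiffOn ℝ 1 Ψ V ∧
      Φ '' U = V ∧ (∀ x ∈ U, Ψ (Φ x) = x) ∧ (∀ y ∈ V, Φ (Ψ y) = y) ∧
      Φ ((0 : ℝ), (0 : ℝ)) = ((0 : ℝ), (0 : ℝ)) ∧
      Φ '' (U ∩ Γ) = V ∩ {p : ℝ × ℝ | p.2 = 0} :=
  stmt_1_general s Γ hΓC
end

section
/- Let ρ > 0 and let S be an open convex subset of ℝ² contained in ℝ × (0, +∞). If S meets both (-∞, -ρ) × ℝ and (ρ, +∞) × ℝ, then there exist s ∈ ℝ, b > 0, and a function f : [-ρ, ρ] → ℝ such that the set ∂S ∩ {(x,y) : x ∈ [-ρ, ρ] and y < s·x + b} equals the graph of f. -/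
/-!
The chord joining a point of `S` left of the strip to one right of it lies in `S` over
`[-ρ, ρ]`, and its height at `0` is positive. On each vertical line below the chord, `∂S` is
exactly the infimum of the slice of `S`: above the infimum the line stays in `S` by convexity,
and a point of `closure S` strictly below it would put the whole open segment up to the chord
into the open convex set `S`.
-/

open Set

theorem IsOpen.csInf_notMem {α : Type*} [ConditionallyCompleteLinearOrder α] [TopologicalSpace α]
    [OrderTopology α] [DenselyOrdered α] [NoMinOrder α] {A : Set α} (hA : IsOpen A)
    (hbdd : BddBelow A) : sInf A ∉ A := fun h =>
  let ⟨_, hy, hyA⟩ := ((frequently_lt_nhds (sInf A)).and_eventually (hA.mem_nhds h)).exists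
  hy.not_ge (csInf_le hbdd hyA)

theorem IsOpen.csInf_preimage_mk_lt {E : Type*} [TopologicalSpace E] {S : Set (E × ℝ)} {x : E}
    {c : ℝ} (hSo : IsOpen S) (hbdd : BddBelow (Prod.mk x ⁻¹' S))
    (hc : (x, c) ∈ S) : sInf (Prod.mk x ⁻¹' S) < c :=
  (csInf_le hbdd hc).lt_of_ne fun h =>
    (hSo.preimage (Continuous.prodMk_right x)).csInf_notMem hbdd (h ▸ hc)

section VerticalSlice

variable {E : Type*} [AddCommGroup E] [Module ℝ E] {S : Set (E × ℝ)} {x : E} {y c : ℝ}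

theorem Convex.Icc_subset_preimage_mk (hS : Convex ℝ S) (hy : (x, y) ∈ S) (hc : (x, c) ∈ S) :
    Icc y c ⊆ Prod.mk x ⁻¹' S := by
  rcases le_or_gt y c with hyc | hcy
  · rw [← segment_eq_Icc (𝕜 := ℝ) hyc, ← image_subset_iff, Prod.image_mk_segment_right]
    exact hS.segment_subset hy hc
  · simp [Icc_eq_empty_of_lt hcy]

variable [TopologicalSpace E] [IsTopologicalAddGroup E] [ContinuousSMul ℝ E]

theorem Convex.Ioo_subset_preimage_mk_of_mem_closure (hSo : IsOpen S) (hS : Convex ℝ S)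
    (hy : (x, y) ∈ closure S) (hc : (x, c) ∈ S) : Ioo y c ⊆ Prod.mk x ⁻¹' S := by
  rcases le_or_gt c y with hcy | hyc
  · simp [Ioo_eq_empty_of_le hcy]
  rw [← openSegment_eq_Ioo (𝕜 := ℝ) hyc, ← image_subset_iff, Prod.image_mk_openSegment_right,
    openSegment_symm, ← hSo.interior_eq]
  exact hS.openSegment_interior_closure_subset_interior (by rwa [hSo.interior_eq]) hy

theorem IsOpen.mk_mem_frontier_iff_eq_csInf (hSo : IsOpen S) (hS : Convex ℝ S)
    (hbdd : BddBelow (Prod.mk x ⁻¹' S)) (hc : (x, c) ∈ S) (hyc : y ≤ c) :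
    (x, y) ∈ frontier S ↔ y = sInf (Prod.mk x ⁻¹' S) := by
  rw [hSo.frontier_eq]
  constructor
  · rintro ⟨hcl, hnS⟩
    rcases lt_trichotomy y (sInf (Prod.mk x ⁻¹' S)) with hlt | heq | hgt
    · have hy_lt_c : y < c := hlt.trans_le (csInf_le hbdd hc)
      have hle := csInf_le_csInf hbdd (nonempty_Ioo.2 hy_lt_c)
        (hS.Ioo_subset_preimage_mk_of_mem_closure hSo hcl hc)
      exact absurd (hle.trans_eq (csInf_Ioo hy_lt_c)) hlt.not_ge
    · exact heq
    · obtain ⟨z, hz, hzy⟩ := exists_lt_of_csInf_lt ⟨c, hc⟩ hgt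
      exact absurd (hS.Icc_subset_preimage_mk hz hc ⟨hzy.le, hyc⟩) hnS
  · rintro rfl
    exact ⟨(Continuous.prodMk_right x).closure_preimage_subset S (csInf_mem_closure ⟨c, hc⟩ hbdd),
      (hSo.preimage (Continuous.prodMk_right x)).csInf_notMem hbdd⟩

end VerticalSlice

theorem Convex.mk_mem_of_mem_Icc {S : Set (ℝ × ℝ)} (hS : Convex ℝ S) {p q : ℝ × ℝ}
    (hp : p ∈ S) (hq : q ∈ S) (hpq : p.1 < q.1) {x : ℝ} (hx : x ∈ Icc p.1 q.1) :
    (x, (q.2 - p.2) / (q.1 - p.1) * (x - p.1) + p.2) ∈ S := by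
  have hd : 0 < q.1 - p.1 := sub_pos.2 hpq
  set t := (x - p.1) / (q.1 - p.1)
  have ht0 : 0 ≤ t := div_nonneg (sub_nonneg.2 hx.1) hd.le
  have ht1 : t ≤ 1 := (div_le_one hd).2 (by linarith [hx.2])
  convert hS hp hq (sub_nonneg.2 ht1) ht0 (by ring) using 1
  ext <;> simp only [Prod.smul_fst, Prod.smul_snd, Prod.fst_add, Prod.snd_add, smul_eq_mul, t] <;>
    field_simp <;> ring

theorem stmt_2 (ρ : ℝ) (hρ : 0 < ρ) (S : Set (ℝ × ℝ))
    (hopen : IsOpen S) (hconv : Convex ℝ S)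
    (hsub : S ⊆ {p : ℝ × ℝ | 0 < p.2})
    (hleft : (S ∩ {p : ℝ × ℝ | p.1 < -ρ}).Nonempty)
    (hright : (S ∩ {p : ℝ × ℝ | ρ < p.1}).Nonempty) :
    ∃ (s b : ℝ) (f : ℝ → ℝ), 0 < b ∧
      frontier S ∩ {p : ℝ × ℝ | p.1 ∈ Set.Icc (-ρ) ρ ∧ p.2 < s * p.1 + b}
        = (fun x => (x, f x)) '' Set.Icc (-ρ) ρ := by
  obtain ⟨p, hp, hp_left⟩ := hleft
  obtain ⟨q, hq, hq_right⟩ := hright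
  simp only [mem_ofPred_eq] at hp_left hq_right
  set s := (q.2 - p.2) / (q.1 - p.1)
  set b := p.2 - s * p.1
  have hchord : ∀ x ∈ Icc (-ρ) ρ, (x, s * x + b) ∈ S := fun x hx => by
    convert hconv.mk_mem_of_mem_Icc (x := x) hp hq (by linarith)
      ⟨by linarith [hx.1], by linarith [hx.2]⟩ using 2
    ring
  have hbdd : ∀ x, BddBelow (Prod.mk x ⁻¹' S) := fun x => ⟨0, fun y hy => (hsub hy).le⟩
  refine ⟨s, b, fun x => sInf (Prod.mk x ⁻¹' S),
    by simpa using hsub (hchord 0 ⟨by linarith, hρ.le⟩), ?_⟩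
  ext ⟨x, y⟩
  simp only [mem_inter_iff, mem_ofPred_eq, mem_image, Prod.mk.injEq]
  constructor
  · rintro ⟨hfr, hx, hy⟩
    exact ⟨x, hx, rfl,
      ((hopen.mk_mem_frontier_iff_eq_csInf hconv (hbdd x) (hchord x hx) hy.le).1 hfr).symm⟩
  · rintro ⟨x, hx, rfl, rfl⟩
    have hlt := hopen.csInf_preimage_mk_lt (hbdd x) (hchord x hx)
    exact ⟨(hopen.mk_mem_frontier_iff_eq_csInf hconv (hbdd x) (hchord x hx) hlt.le).2 rfl, hx, hlt⟩
end

section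
/- With the notation of the graph lemma: the function f : [-ρ, ρ] → ℝ defined by f(x) = inf{y ≥ 0 : (x,y) ∈ closure(S)} (for S an open convex subset of ℝ × (0,∞) meeting both half-planes x < -ρ and x > ρ) is nonnegative and convex on [-ρ, ρ]. -/
theorem stmt_3 (ρ : ℝ) (hρ : 0 < ρ) (S : Set (ℝ × ℝ))
    (hopen : IsOpen S) (hconv : Convex ℝ S)
    (hsub : S ⊆ {p : ℝ × ℝ | 0 < p.2})
    (hleft : (S ∩ {p : ℝ × ℝ | p.1 < -ρ}).Nonempty)
    (hright : (S ∩ {p : ℝ × ℝ | ρ < p.1}).Nonempty)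
    (f : ℝ → ℝ)
    (hf : ∀ x, f x = sInf {y : ℝ | 0 ≤ y ∧ (x, y) ∈ closure S}) :
    (∀ x ∈ Set.Icc (-ρ) ρ, 0 ≤ f x) ∧ ConvexOn ℝ (Set.Icc (-ρ) ρ) f := by
  obtain ⟨p, hpS, hp⟩ := hleft
  obtain ⟨q, hqS, hq⟩ := hright
  have hpq : p.1 < q.1 := by
    have : p.1 < -ρ := hp
    have : ρ < q.1 := hq
    linarith
  have key : ∀ x ∈ Set.Icc (-ρ) ρ, 0 ≤ f x ∧ (x, f x) ∈ closure S := by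
    intro x hx
    obtain ⟨hx1, hx2⟩ := hx
    have hp1 : p.1 < -ρ := hp
    have hq1 : ρ < q.1 := hq
    set T := {y : ℝ | 0 ≤ y ∧ (x, y) ∈ closure S} with hT
    have hbdd : BddBelow T := ⟨0, fun y hy => hy.1⟩
    have hne : T.Nonempty := by
      set t := (x - p.1) / (q.1 - p.1) with ht
      have h1 : 0 ≤ t := div_nonneg (by linarith) (by linarith)
      have h2 : t ≤ 1 := by
        rw [div_le_one (by linarith)]; linarith
      have hr := hconv hpS hqS (by linarith : (0:ℝ) ≤ 1 - t) h1 (by ring)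
      have hx1' : ((1 - t) • p + t • q).1 = x := by
        simp only [Prod.fst_add, Prod.smul_fst, smul_eq_mul]
        have hd : t * (q.1 - p.1) = x - p.1 := div_mul_cancel₀ _ (by linarith)
        linear_combination hd
      have heq : ((1 - t) • p + t • q) = (x, ((1 - t) • p + t • q).2) := by
        exact Prod.ext hx1' rfl
      exact ⟨((1 - t) • p + t • q).2, le_of_lt (hsub hr), heq ▸ subset_closure hr⟩
    have hcl : IsClosed T := by
      have : T = Set.Ici 0 ∩ (fun y => (x, y)) ⁻¹' closure S := rfl
      rw [this]
      exact isClosed_Ici.inter (isClosed_closure.preimage (by continuity))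
    have hmem := hcl.csInf_mem hne hbdd
    rw [hf]
    exact ⟨hmem.1, hmem.2⟩
  refine ⟨fun x hx => (key x hx).1, convex_Icc _ _, ?_⟩
  intro x hx z hz a b ha hb hab
  have hmem : (a • x + b • z, a * f x + b * f z) ∈ closure S := by
    have := hconv.closure (key x hx).2 (key z hz).2 ha hb hab
    simpa [Prod.smul_mk, Prod.mk_add_mk, smul_eq_mul] using this
  rw [hf]
  have : a * f x + b * f z ∈ {y : ℝ | 0 ≤ y ∧ (a • x + b • z, y) ∈ closure S} :=
    ⟨add_nonneg (mul_nonneg ha (key x hx).1) (mul_nonneg hb (key z hz).1), hmem⟩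
  calc sInf {y : ℝ | 0 ≤ y ∧ (a • x + b • z, y) ∈ closure S}
      ≤ a * f x + b * f z := csInf_le ⟨0, fun y hy => hy.1⟩ this
    _ = a • f x + b • f z := by simp [smul_eq_mul]
end

section
/- For every point x ∈ [-ρ, ρ], the point (x, f(x)) lies on the boundary ∂S, where f(x) = inf{y ≥ 0 : (x,y) ∈ closure(S)} and S is an open convex subset of ℝ × (0,∞) meeting both half-planes x < -ρ and x > ρ. -/
theorem stmt_4 (ρ : ℝ) (hρ : 0 < ρ) (S : Set (ℝ × ℝ))
    (hopen : IsOpen S) (hconv : Convex ℝ S)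
    (hsub : S ⊆ {p : ℝ × ℝ | 0 < p.2})
    (hleft : (S ∩ {p : ℝ × ℝ | p.1 < -ρ}).Nonempty)
    (hright : (S ∩ {p : ℝ × ℝ | ρ < p.1}).Nonempty)
    (f : ℝ → ℝ)
    (hf : ∀ x, f x = sInf {y : ℝ | 0 ≤ y ∧ (x, y) ∈ closure S}) :
    ∀ x ∈ Set.Icc (-ρ) ρ, (x, f x) ∈ frontier S := by
  intro x hx
  obtain ⟨⟨a, ya⟩, haS, ha⟩ := hleft
  obtain ⟨⟨b, yb⟩, hbS, hb⟩ := hright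
  simp only [Set.mem_setOf_eq] at ha hb
  have hab : a < b := by linarith [hx.1, hx.2]
  set t := (x - a) / (b - a) with ht
  have ht0 : 0 ≤ t := div_nonneg (by linarith [hx.1]) (by linarith)
  have ht1 : t ≤ 1 := by
    rw [ht, div_le_one (by linarith)]; linarith [hx.2]
  have hmem : (1 - t) • ((a, ya) : ℝ × ℝ) + t • (b, yb) ∈ S :=
    hconv haS hbS (by linarith) ht0 (by ring)
  have hx1 : ((1 - t) • ((a, ya) : ℝ × ℝ) + t • (b, yb)).1 = x := by
    have key : t * (b - a) = x - a := div_mul_cancel₀ _ (ne_of_gt (by linarith))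
    simp only [Prod.smul_mk, Prod.fst_add, Prod.smul_fst, smul_eq_mul]
    linear_combination key
  obtain ⟨y0, hy0⟩ : ∃ y0, (x, y0) ∈ S :=
    ⟨((1 - t) • ((a, ya) : ℝ × ℝ) + t • (b, yb)).2, by
      rwa [show ((1 - t) • ((a, ya) : ℝ × ℝ) + t • (b, yb)) = (x, _) from Prod.ext hx1 rfl] at hmem⟩
  have hy0pos : 0 < y0 := hsub hy0
  set T := {y : ℝ | 0 ≤ y ∧ (x, y) ∈ closure S} with hT
  have hTne : T.Nonempty := ⟨y0, hy0pos.le, subset_closure hy0⟩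
  have hTbdd : BddBelow T := ⟨0, fun y hy => hy.1⟩
  have hTclosed : IsClosed T := by
    have heq : T = Set.Ici 0 ∩ (fun y : ℝ => (x, y)) ⁻¹' closure S := rfl
    rw [heq]
    exact isClosed_Ici.inter (isClosed_closure.preimage (by continuity))
  have hfT : f x ∈ T := by
    rw [hf x]
    exact hTclosed.csInf_mem hTne hTbdd
  rw [frontier, hopen.interior_eq]
  refine ⟨hfT.2, fun hfS => ?_⟩
  obtain ⟨ε, hε, hball⟩ := Metric.isOpen_iff.mp hopen _ hfS
  have hfpos : 0 < f x := hsub hfS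
  set δ := min (ε / 2) (f x / 2) with hδdef
  have hδ : 0 < δ := lt_min (by linarith) (by linarith)
  have hδε : δ < ε := lt_of_le_of_lt (min_le_left _ _) (by linarith)
  have hmem' : f x - δ ∈ T := by
    constructor
    · have : δ ≤ f x / 2 := min_le_right _ _
      linarith
    · apply subset_closure
      apply hball
      rw [Metric.mem_ball, Prod.dist_eq]
      have h1 : dist x x = 0 := dist_self x
      have h2 : dist (f x - δ) (f x) = δ := by
        rw [Real.dist_eq, abs_of_nonpos (by linarith)]; ring
      simp only [h1, h2]
      simpa [max_eq_right hδ.le] using hδε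
  have hle : sInf T ≤ f x - δ := csInf_le hTbdd hmem'
  rw [← hf x] at hle
  linarith
end

section
/- Let a > 0, H ≥ 1, and let f : [-2a, 2a] → ℝ be an H-quasi-symmetrically convex function with f ≥ 0 and f(0) = 0. Set H₂ = (4H(H+1))^((1+a)/a) and α = 1 + log₂(1 + 1/H₂), and M(f) = max{f(-a), f(a)}. Then f(x) ≤ 160·(H₂ + 1)·M(f)·|x|^α for all x ∈ [-a, a]. -/
open Real Set

/-- Tangent line of a convex differentiable function lies below the graph. -/
private lemma tangent_le {S : Set ℝ} {f : ℝ → ℝ} {d p y : ℝ} (hconv : ConvexOn ℝ S f)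
    (hd : HasDerivAt f d p) (hp : p ∈ S) (hy : y ∈ S) :
    f p + d * (y - p) ≤ f y := by
  rcases lt_trichotomy p y with h | h | h
  · have hs := hconv.le_slope_of_hasDerivAt hp hy h hd
    rw [slope_def_field] at hs
    have := (le_div_iff₀ (by linarith)).mp hs
    linarith
  · simp [h]
  · have hs := hconv.slope_le_of_hasDerivAt hy hp h hd
    rw [slope_def_field] at hs
    have := (div_le_iff₀ (by linarith)).mp hs
    linarith

set_option maxHeartbeats 2000000 in
theorem stmt_5 (a H : ℝ) (ha : 0 < a) (hH : 1 ≤ H)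
    (f f' : ℝ → ℝ)
    (hconv : ConvexOn ℝ (Set.Icc (-(2 * a)) (2 * a)) f)
    (hderiv : ∀ x ∈ Set.Icc (-(2 * a)) (2 * a), HasDerivAt f (f' x) x)
    (hQS : ∀ x h : ℝ, x + h ∈ Set.Icc (-(2 * a)) (2 * a) →
      x - h ∈ Set.Icc (-(2 * a)) (2 * a) →
      f (x + h) - f x - f' x * h ≤ H * (f (x - h) - f x - f' x * (-h)))
    (hpos : ∀ x ∈ Set.Icc (-(2 * a)) (2 * a), 0 ≤ f x)
    (h0 : f 0 = 0) :
    ∀ x ∈ Set.Icc (-a) a,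
      f x ≤ 160 * ((4 * H * (H + 1)) ^ ((1 + a) / a) + 1) * max (f (-a)) (f a) *
        |x| ^ (1 + Real.logb 2 (1 + 1 / (4 * H * (H + 1)) ^ ((1 + a) / a))) := by
  have hH0 : (0:ℝ) < H := by linarith
  obtain ⟨B, hBdef⟩ : ∃ b : ℝ, b = 4 * H * (H + 1) := ⟨_, rfl⟩
  obtain ⟨e, hedef⟩ : ∃ b : ℝ, b = (1 + a) / a := ⟨_, rfl⟩
  rw [← hBdef, ← hedef]
  obtain ⟨T, hTdef⟩ : ∃ b : ℝ, b = B ^ e := ⟨_, rfl⟩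
  rw [← hTdef]
  obtain ⟨K, hKdef⟩ : ∃ b : ℝ, b = 1 + 1 / T := ⟨_, rfl⟩
  rw [← hKdef]
  obtain ⟨α, hadef⟩ : ∃ b : ℝ, b = 1 + Real.logb 2 K := ⟨_, rfl⟩
  rw [← hadef]
  obtain ⟨M, hMdef⟩ : ∃ b : ℝ, b = max (f (-a)) (f a) := ⟨_, rfl⟩
  rw [← hMdef]
  have hB8 : (8:ℝ) ≤ B := by rw [hBdef]; nlinarith
  have hBH : 8 * H ≤ B := by rw [hBdef]; nlinarith
  have hB1 : (1:ℝ) ≤ B := by linarith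
  have hB0 : (0:ℝ) < B := by linarith
  have he1 : (1:ℝ) ≤ e := by
    rw [hedef, le_div_iff₀ ha]; linarith
  have hBT : B ≤ T := by
    rw [hTdef]
    calc B = B ^ (1:ℝ) := (Real.rpow_one B).symm
    _ ≤ B ^ e := Real.rpow_le_rpow_of_exponent_le hB1 he1
  have hT8 : (8:ℝ) ≤ T := le_trans hB8 hBT
  have hTH : 8 * H ≤ T := le_trans hBH hBT
  have hT0 : (0:ℝ) < T := by linarith
  -- T ≥ 8H/a²
  have hTa : 8 * H / a ^ 2 ≤ T := by
    have h1a : (0:ℝ) ≤ 1 / a := by positivity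
    have hexp : 1 / a ≤ Real.exp (1 / a) := by
      have := Real.add_one_le_exp (1 / a); linarith
    have hexp2 : (1 / a) ^ 2 ≤ Real.exp (1 / a) ^ 2 := by
      exact pow_le_pow_left₀ h1a hexp 2
    have h8r : Real.exp (1 / a) ^ 2 ≤ (8:ℝ) ^ (1 / a) := by
      have hlog8 : (2:ℝ) ≤ Real.log 8 := by
        have h8 : (8:ℝ) = 2 ^ (3:ℕ) := by norm_num
        rw [h8, Real.log_pow]
        have := Real.log_two_gt_d9
        push_cast
        nlinarith
      have : Real.exp (1/a) ^ 2 = Real.exp (2 / a) := by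
        rw [← Real.exp_nat_mul]
        ring_nf
      rw [this, Real.rpow_def_of_pos (by norm_num : (0:ℝ) < 8)]
      apply Real.exp_le_exp.mpr
      calc 2 / a = (1/a) * 2 := by ring
      _ ≤ (1/a) * Real.log 8 := by
        apply mul_le_mul_of_nonneg_left hlog8 h1a
      _ = Real.log 8 * (1/a) := by ring
    have hsplit : T = B ^ (1/a : ℝ) * B := by
      rw [hTdef, hedef]
      rw [show (1 + a)/a = 1/a + 1 by field_simp]
      rw [Real.rpow_add hB0, Real.rpow_one]
    have hbase : (8:ℝ) ^ (1/a:ℝ) ≤ B ^ (1/a:ℝ) :=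
      Real.rpow_le_rpow (by norm_num) hB8 h1a
    have h1a2 : (1:ℝ) / a ^ 2 ≤ B ^ (1/a:ℝ) := by
      calc (1:ℝ) / a ^ 2 = (1/a)^2 := by rw [div_pow]; norm_num
      _ ≤ Real.exp (1/a) ^ 2 := hexp2
      _ ≤ (8:ℝ) ^ (1/a:ℝ) := h8r
      _ ≤ B ^ (1/a:ℝ) := hbase
    calc 8 * H / a ^ 2 = (1 / a ^ 2) * (8 * H) := by ring
    _ ≤ B ^ (1/a:ℝ) * B := by
      apply mul_le_mul h1a2 hBH (by positivity) (by positivity)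
    _ = T := hsplit.symm
  have hK1 : (1:ℝ) < K := by
    rw [hKdef]; nlinarith [one_div_pos.mpr hT0]
  have hK0 : (0:ℝ) < K := by linarith
  have hK2 : K ≤ 2 := by
    rw [hKdef]
    have : 1 / T ≤ 1 := by rw [div_le_one hT0]; linarith
    linarith
  -- ε bound : T * (K^2 - 1) ≤ 17/8
  have hKsq : T * (K ^ 2 - 1) ≤ 17 / 8 := by
    have hTinv : T * (1/T) = 1 := by field_simp
    have h1T8 : 1 / T ≤ 1 / 8 := by
      apply one_div_le_one_div_of_le (by norm_num) hT8
    have hexpand : K ^ 2 - 1 = 2 * (1/T) + (1/T)^2 := by rw [hKdef]; ring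
    rw [hexpand]
    have h1T0 : (0:ℝ) < 1/T := one_div_pos.mpr hT0
    calc T * (2 * (1/T) + (1/T)^2) = 2 * (T * (1/T)) + (T * (1/T)) * (1/T) := by ring
    _ = 2 + 1/T := by rw [hTinv]; ring
    _ ≤ 2 + 1/8 := by linarith
    _ = 17/8 := by norm_num
  have hα1 : (1:ℝ) < α := by
    rw [hadef]
    have := Real.logb_pos (by norm_num : (1:ℝ) < 2) hK1
    linarith
  have hα0 : (0:ℝ) ≤ α := by linarith
  have hα2 : α ≤ 2 := by
    rw [hadef]
    have h1 : Real.logb 2 K ≤ Real.logb 2 2 :=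
      Real.logb_le_logb_of_le (by norm_num) hK0 hK2
    rw [Real.logb_self_eq_one (by norm_num : (1:ℝ) < 2)] at h1
    linarith
  have h2α : (2:ℝ) ^ α = 2 * K := by
    rw [hadef, Real.rpow_add (by norm_num : (0:ℝ) < 2), Real.rpow_one,
      Real.rpow_logb (by norm_num) (by norm_num) hK0]
  have h4α : (4:ℝ) ^ α = 4 * K ^ 2 := by
    have : (4:ℝ) = 2 ^ (2:ℕ) := by norm_num
    rw [this, ← Real.rpow_natCast (2:ℝ) 2, ← Real.rpow_mul (by norm_num),
      show ((2:ℕ):ℝ) * α = α * 2 by push_cast; ring,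
      Real.rpow_mul (by norm_num), h2α]
    rw [Real.rpow_two]
    ring
  -- membership helper
  have hmem : ∀ y : ℝ, -(2*a) ≤ y → y ≤ 2*a → y ∈ Set.Icc (-(2*a)) (2*a) :=
    fun y h1 h2 => ⟨h1, h2⟩
  have h0mem : (0:ℝ) ∈ Set.Icc (-(2*a)) (2*a) := hmem 0 (by linarith) (by linarith)
  -- derivative at 0 vanishes
  have hf'0 : f' 0 = 0 := by
    have hmin : IsLocalMin f 0 := by
      have hIcc : Set.Icc (-(2*a)) (2*a) ∈ nhds (0:ℝ) :=
        Icc_mem_nhds (by linarith) (by linarith)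
      filter_upwards [hIcc] with y hy
      rw [h0]; exact hpos y hy
    exact hmin.hasDerivAt_eq_zero (hderiv 0 h0mem)
  -- side comparison
  have hside : ∀ t : ℝ, -(2*a) ≤ t → t ≤ 2*a → f t ≤ H * f (-t) := by
    intro t h1 h2
    have := hQS 0 t (by simpa using hmem t h1 h2)
      (by rw [zero_sub]; exact hmem (-t) (by linarith) (by linarith))
    simpa [h0, hf'0] using this
  -- chord inequality through 0
  have hchord : ∀ s t : ℝ, 0 ≤ s → s ≤ t → t ≤ 2*a → f s ≤ (s/t) * f t := by
    intro s t hs hst ht2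
    rcases eq_or_lt_of_le (hs.trans hst) with h | ht0
    · have hs0 : s = 0 := le_antisymm (hst.trans h.symm.le) hs
      rw [hs0, ← h, h0]
      simp
    · have h1 : s/t + (1 - s/t) = 1 := by ring
      have h2 : (0:ℝ) ≤ s/t := by positivity
      have h3 : (0:ℝ) ≤ 1 - s/t := by
        have : s/t ≤ 1 := by rw [div_le_one ht0]; exact hst
        linarith
      have := hconv.2 (hmem t (by linarith) ht2) h0mem h2 h3 h1
      simp only [smul_eq_mul, mul_zero, add_zero, h0] at this
      have harg : s/t * t = s := by field_simp
      rw [harg] at this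
      linarith
  -- the key one-step decay lemma
  have hkey : ∀ x : ℝ, 0 < x → x ≤ a → f (x/4) ≤ f x / (4 * K ^ 2) := by
    intro x hx hxa
    have hxI : x ∈ Set.Icc (-(2*a)) (2*a) := hmem x (by linarith) (by linarith)
    have hx4I : x/4 ∈ Set.Icc (-(2*a)) (2*a) := hmem _ (by linarith) (by linarith)
    have hfx0 : 0 ≤ f x := hpos x hxI
    rcases le_or_gt (f (x/4)) 0 with hu | hu
    · exact hu.trans (by positivity)
    by_contra hcon
    push_neg at hcon
    have hfx : f x < 4 * K ^ 2 * f (x/4) := by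
      rw [div_lt_iff₀ (by positivity)] at hcon
      linarith
    -- tangent at x/4 through 0
    have htan4 : f (x/4) ≤ f' (x/4) * (x/4) := by
      have := tangent_le hconv (hderiv (x/4) hx4I) hx4I h0mem
      have h : f (x/4) + f' (x/4) * (0 - x/4) ≤ f 0 := this
      rw [h0] at h
      linarith only [h]
    -- chord : f(x/4) ≤ (1/2) f(x/2)
    have hch : 2 * f (x/4) ≤ f (x/2) := by
      have := hchord (x/4) (x/2) (by linarith) (by linarith) (by linarith)
      have hr : (x/4)/(x/2) = 1/2 := by
        field_simp
        ring
      rw [hr] at this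
      linarith
    -- side : f(x/2) ≤ H f(-(x/2))
    have hs2 : f (x/2) ≤ H * f (-(x/2)) := hside (x/2) (by linarith) (by linarith)
    -- QS at x/4 with step -(3x/4)
    have hqs := hQS (x/4) (-(3*x/4))
      (by rw [show x/4 + -(3*x/4) = -(x/2) by ring]
          exact hmem _ (by linarith) (by linarith))
      (by rw [show x/4 - -(3*x/4) = x by ring]; exact hxI)
    rw [show x/4 + -(3*x/4) = -(x/2) by ring, show x/4 - -(3*x/4) = x by ring] at hqs
    -- hqs : f(-(x/2)) - f(x/4) - f'(x/4) * (-(3x/4)) ≤ H * (f x - f(x/4) - f'(x/4)*(3x/4))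
    set u := f (x/4) with hudef
    set w := f (-(x/2)) with hwdef
    set q := f' (x/4) * (3*x/4) with hqdef
    have hq3u : 3 * u ≤ q := by rw [hqdef, hudef] at *; linarith only [htan4]
    have hqs' : w - u + q ≤ H * (f x - u - q) := by
      have : f' (x/4) * (-(3*x/4)) = -q := by rw [hqdef]; ring
      rw [this] at hqs
      have h2 : f' (x/4) * (- -(3*x/4)) = q := by rw [hqdef]; ring
      rw [h2] at hqs
      linarith
    have hHw : 2 * u ≤ H * w := by
      calc 2 * u ≤ f (x/2) := hch
      _ ≤ H * w := hs2
    -- multiply hqs' by H and assemble the contradiction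
    have hH2 : (0:ℝ) ≤ H^2 := by positivity
    have hstep1 : H * w - H * u + H * q ≤ H^2 * (f x - u - q) := by
      have h1 := mul_le_mul_of_nonneg_left hqs' (le_of_lt hH0)
      linarith only [h1]
    have hq1 : 3 * (H * u) ≤ H * q := by
      have := mul_le_mul_of_nonneg_left hq3u (le_of_lt hH0)
      linarith only [this]
    have hq2 : 3 * (H^2 * u) ≤ H^2 * q := by
      have := mul_le_mul_of_nonneg_left hq3u hH2
      linarith only [this]
    have hstep3 : 2*u + 2*(H*u) + 4*(H^2*u) ≤ H^2 * f x := by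
      linarith only [hstep1, hHw, hq1, hq2]
    have h4 : H^2 * f x ≤ H^2 * (4 * K^2 * u) := by
      exact mul_le_mul_of_nonneg_left hfx.le hH2
    have hlin : (2 + 2*H + 4*H^2) * u ≤ (4*(H^2 * K^2)) * u := by
      linarith only [hstep3, h4]
    have hstep4 : 2 + 2*H + 4*H^2 ≤ 4*(H^2 * K^2) :=
      le_of_mul_le_mul_right hlin hu
    have hstep4' : 2 + 2*H ≤ 4*H^2*(K^2 - 1) := by linarith only [hstep4]
    have hstep5a : (2 + 2*H) * T ≤ (4*H^2*(K^2-1)) * T :=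
      mul_le_mul_of_nonneg_right hstep4' hT0.le
    have hstep5b : 4*H^2 * (T*(K^2-1)) ≤ 4*H^2 * (17/8) :=
      mul_le_mul_of_nonneg_left hKsq (by positivity)
    have hstep5 : (2 + 2*H) * T ≤ 17/2 * H^2 := by
      linarith only [hstep5a, hstep5b]
    have hBT' : 4*H*(H+1) ≤ T := hBdef ▸ hBT
    have hprod : (2+2*H) * (4*H*(H+1)) ≤ (2+2*H) * T :=
      mul_le_mul_of_nonneg_left hBT' (by linarith : (0:ℝ) ≤ 2+2*H)
    have hc : H^2 * 1 ≤ H^2 * H := mul_le_mul_of_nonneg_left hH hH2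
    have hc2 : (1:ℝ) ≤ H ^ 2 := by
      have h1 := mul_le_mul hH hH zero_le_one (by linarith : (0:ℝ) ≤ H)
      calc (1:ℝ) = 1 * 1 := by norm_num
      _ ≤ H * H := h1
      _ = H ^ 2 := (sq H).symm
    linarith only [hprod, hstep5, hc, hc2, hH, hH0]
  -- nonnegativity of M
  have hM0 : 0 ≤ M := by
    rw [hMdef]
    exact le_trans (hpos a (hmem a (by linarith) (by linarith))) (le_max_right _ _)
  have hKK : (0:ℝ) < 4 * K ^ 2 := by positivity
  -- iteration down dyadic (base-4) scales
  have hiter : ∀ n : ℕ, f (a / 4 ^ n) ≤ M / (4 * K ^ 2) ^ n := by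
    intro n
    induction n with
    | zero =>
      simpa using (hMdef ▸ le_max_right (f (-a)) (f a))
    | succ n ih =>
      have h4n : (0:ℝ) < 4 ^ n := by positivity
      have hxn : (0:ℝ) < a / 4 ^ n := by positivity
      have hxna : a / 4 ^ n ≤ a := by
        rw [div_le_iff₀ h4n]
        exact le_mul_of_one_le_right ha.le (one_le_pow₀ (by norm_num))
      have hk := hkey (a / 4 ^ n) hxn hxna
      have heq : a / 4 ^ (n+1) = (a / 4 ^ n) / 4 := by rw [pow_succ]; ring
      rw [heq]
      calc f ((a / 4 ^ n)/4) ≤ f (a / 4 ^ n) / (4 * K ^ 2) := hk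
      _ ≤ (M / (4 * K ^ 2) ^ n) / (4 * K ^ 2) := by gcongr
      _ = M / (4 * K ^ 2) ^ (n+1) := by rw [div_div, ← pow_succ]
  -- pointwise bound on (0, a]
  have hbound : ∀ y : ℝ, 0 < y → y ≤ a → f y ≤ 16 * M * (y / a) ^ α := by
    intro y hy hya
    have hPex : ∃ m : ℕ, a / 4 ^ (m+1) < y := by
      obtain ⟨n, hn⟩ : ∃ n : ℕ, (1/4:ℝ) ^ n < y / a :=
        exists_pow_lt_of_lt_one (by positivity) (by norm_num)
      refine ⟨n, ?_⟩
      have h1 : (1/4:ℝ) ^ n * a < y := (lt_div_iff₀ ha).mp hn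
      have h2 : (1/4:ℝ) ^ n = 1 / 4 ^ n := by
        rw [div_pow]; norm_num
      rw [h2] at h1
      have h3 : a / 4 ^ (n+1) ≤ a / 4 ^ n := by
        apply div_le_div_of_nonneg_left ha.le (by positivity)
        exact pow_le_pow_right₀ (by norm_num) (Nat.le_succ n)
      calc a / 4 ^ (n+1) ≤ a / 4 ^ n := h3
      _ = 1 / 4 ^ n * a := by ring
      _ < y := h1
    classical
    set n := Nat.find hPex with hndef
    have hfind : a / 4 ^ (n+1) < y := Nat.find_spec hPex
    have hupper : y ≤ a / 4 ^ n := by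
      rcases Nat.eq_zero_or_pos n with h | h
      · rw [h]; simpa using hya
      · have hmin := Nat.find_min hPex (show n - 1 < n from Nat.pred_lt h.ne')
        rw [show n - 1 + 1 = n from Nat.succ_pred_eq_of_pos h] at hmin
        exact not_lt.mp hmin
    have h4n : (0:ℝ) < 4 ^ n := by positivity
    have hanI : a / 4 ^ n ∈ Set.Icc (-(2*a)) (2*a) := by
      constructor
      · have : (0:ℝ) ≤ a / 4 ^ n := by positivity
        linarith
      · calc a / 4 ^ n ≤ a := by
              rw [div_le_iff₀ h4n]
              exact le_mul_of_one_le_right ha.le (one_le_pow₀ (by norm_num))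
        _ ≤ 2 * a := by linarith
    have hstep : f y ≤ f (a / 4 ^ n) := by
      have hc := hchord y (a / 4 ^ n) hy.le hupper (by linarith [hanI.2])
      have hratio : y / (a / 4 ^ n) ≤ 1 := by
        rw [div_le_one (by positivity)]
        exact hupper
      have hfnn : 0 ≤ f (a / 4 ^ n) := hpos _ hanI
      calc f y ≤ (y / (a / 4 ^ n)) * f (a / 4 ^ n) := hc
      _ ≤ 1 * f (a / 4 ^ n) := mul_le_mul_of_nonneg_right hratio hfnn
      _ = f (a / 4 ^ n) := one_mul _
    -- convert the geometric factor into an rpow of the scale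
    have hgeom : (4 * K ^ 2 : ℝ) ^ n = ((4:ℝ) ^ n) ^ α := by
      rw [← h4α]
      rw [← Real.rpow_natCast ((4:ℝ) ^ α) n, ← Real.rpow_natCast (4:ℝ) n,
        ← Real.rpow_mul (by norm_num : (0:ℝ) ≤ 4),
        ← Real.rpow_mul (by norm_num : (0:ℝ) ≤ 4), mul_comm]
    have hbase : (1:ℝ) / 4 ^ n < 4 * y / a := by
      rw [div_lt_div_iff₀ h4n ha]
      have : a < y * (4 * 4 ^ n) := by
        have := (div_lt_iff₀ (by positivity : (0:ℝ) < 4 ^ (n+1))).mp hfind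
        calc a < y * 4 ^ (n+1) := this
        _ = y * (4 * 4 ^ n) := by rw [pow_succ]; ring
      linarith [this]
    have hfin : M / (4 * K ^ 2) ^ n ≤ 16 * M * (y / a) ^ α := by
      have h1 : M / (4 * K ^ 2) ^ n = M * (((4:ℝ) ^ n)⁻¹) ^ α := by
        rw [hgeom, Real.inv_rpow (by positivity), div_eq_mul_inv]
      have h2 : (((4:ℝ) ^ n)⁻¹) ^ α ≤ (4 * y / a) ^ α := by
        apply Real.rpow_le_rpow (by positivity) _ hα0
        rw [← one_div]
        exact hbase.le
      have h3 : (4 * y / a : ℝ) ^ α = (4:ℝ) ^ α * (y / a) ^ α := by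
        rw [show (4 * y / a : ℝ) = 4 * (y / a) by ring,
          Real.mul_rpow (by norm_num) (by positivity)]
      have h4 : (4:ℝ) ^ α ≤ 16 := by
        calc (4:ℝ) ^ α ≤ (4:ℝ) ^ (2:ℝ) :=
              Real.rpow_le_rpow_of_exponent_le (by norm_num) hα2
        _ = 16 := by
          rw [show (2:ℝ) = ((2:ℕ):ℝ) by norm_num, Real.rpow_natCast]
          norm_num
      have h5 : (((4:ℝ) ^ n)⁻¹) ^ α ≤ 16 * (y / a) ^ α := by
        have hya0 : (0:ℝ) ≤ (y / a) ^ α := Real.rpow_nonneg (by positivity) α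
        calc (((4:ℝ) ^ n)⁻¹) ^ α ≤ (4:ℝ) ^ α * (y / a) ^ α := by rw [← h3]; exact h2
        _ ≤ 16 * (y / a) ^ α := mul_le_mul_of_nonneg_right h4 hya0
      calc M / (4 * K ^ 2) ^ n = M * (((4:ℝ) ^ n)⁻¹) ^ α := h1
      _ ≤ M * (16 * (y / a) ^ α) := mul_le_mul_of_nonneg_left h5 hM0
      _ = 16 * M * (y / a) ^ α := by ring
    calc f y ≤ f (a / 4 ^ n) := hstep
    _ ≤ M / (4 * K ^ 2) ^ n := hiter n
    _ ≤ 16 * M * (y / a) ^ α := hfin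
  -- inverse power of a bound
  have hainv : (a ^ α)⁻¹ ≤ 1 + 1 / a ^ 2 := by
    have ha2 : (0:ℝ) < a ^ 2 := by positivity
    rcases le_or_gt 1 a with h1 | h1
    · have hone : (1:ℝ) ≤ a ^ α := Real.one_le_rpow h1 hα0
      have h2 : 1 / a ^ α ≤ 1 / 1 := one_div_le_one_div_of_le one_pos hone
      rw [one_div, div_one] at h2
      have : (0:ℝ) ≤ 1 / a ^ 2 := by positivity
      linarith
    · have hord : a ^ (2:ℝ) ≤ a ^ α := Real.rpow_le_rpow_of_exponent_ge ha h1.le hα2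
      have h2 : 1 / a ^ α ≤ 1 / a ^ (2:ℝ) :=
        one_div_le_one_div_of_le (Real.rpow_pos_of_pos ha 2) hord
      have h3 : a ^ (2:ℝ) = a ^ (2:ℕ) := by
        rw [show (2:ℝ) = ((2:ℕ):ℝ) by norm_num, Real.rpow_natCast]
      rw [h3] at h2
      rw [one_div, one_div] at h2
      calc (a ^ α)⁻¹ ≤ (a ^ (2:ℕ))⁻¹ := h2
      _ = 1 / a ^ 2 := by rw [one_div]
      _ ≤ 1 + 1 / a ^ 2 := by linarith
  -- scalar comparison
  have hmain : ∀ y : ℝ, 0 < y → y ≤ a →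
      16 * H * M * (y / a) ^ α ≤ 160 * (T + 1) * M * y ^ α := by
    intro y hy hya
    have hsplit : (y / a) ^ α = y ^ α * (a ^ α)⁻¹ := by
      rw [Real.div_rpow hy.le ha.le, div_eq_mul_inv]
    have hN : 0 ≤ M * y ^ α := mul_nonneg hM0 (Real.rpow_nonneg hy.le α)
    have hsc : 16 * H * (a ^ α)⁻¹ ≤ 160 * (T + 1) := by
      have ha2 : (0:ℝ) < a ^ 2 := by positivity
      have h3 : 16 * H * (a ^ α)⁻¹ ≤ 16 * H * (1 + 1 / a ^ 2) :=
        mul_le_mul_of_nonneg_left hainv (by linarith)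
      have hTa' : 8 * H ≤ T * a ^ 2 := (div_le_iff₀ ha2).mp hTa
      have hq1 : 16 * H * a ^ 2 ≤ 2 * (T * a ^ 2) := by
        have hm := mul_le_mul_of_nonneg_right hTH (le_of_lt ha2)
        linarith only [hm]
      have hq2 : 16 * H * (1 + 1 / a ^ 2) ≤ 4 * T := by
        rw [show 16 * H * (1 + 1 / a ^ 2) = 16 * H * (a ^ 2 + 1) / a ^ 2 by
          field_simp]
        rw [div_le_iff₀ ha2]
        linarith only [hq1, hTa']
      linarith only [h3, hq2, hT0]
    calc 16 * H * M * (y / a) ^ α = (16 * H * (a ^ α)⁻¹) * (M * y ^ α) := by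
          rw [hsplit]; ring
    _ ≤ (160 * (T + 1)) * (M * y ^ α) := mul_le_mul_of_nonneg_right hsc hN
    _ = 160 * (T + 1) * M * y ^ α := by ring
  -- conclusion
  intro x hx
  obtain ⟨hx1, hx2⟩ := hx
  rcases lt_trichotomy x 0 with hxn | hx0 | hxp
  · -- negative x
    have hy : 0 < -x := by linarith
    have hya : -x ≤ a := by linarith
    have hsd := hside x (by linarith) (by linarith)
    have hb := hbound (-x) hy hya
    have hfb : f x ≤ 16 * H * M * (-x / a) ^ α := by
      calc f x ≤ H * f (-x) := hsd
      _ ≤ H * (16 * M * (-x / a) ^ α) :=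
        mul_le_mul_of_nonneg_left hb (by linarith)
      _ = 16 * H * M * (-x / a) ^ α := by ring
    have habs : |x| = -x := abs_of_neg hxn
    rw [habs]
    exact le_trans hfb (hmain (-x) hy hya)
  · -- x = 0
    subst hx0
    rw [h0, abs_zero, Real.zero_rpow (by linarith : α ≠ 0)]
    simp
  · -- positive x
    have hb := hbound x hxp hx2
    have hnn : 0 ≤ M * (x / a) ^ α :=
      mul_nonneg hM0 (Real.rpow_nonneg (by positivity) α)
    have h16 : 16 * M * (x / a) ^ α ≤ 16 * H * M * (x / a) ^ α := by
      have h' : (16:ℝ) * (M * (x / a) ^ α) ≤ 16 * H * (M * (x / a) ^ α) :=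
        mul_le_mul_of_nonneg_right (by linarith : (16:ℝ) ≤ 16 * H) hnn
      linarith only [h']
    have habs : |x| = x := abs_of_pos hxp
    rw [habs]
    exact le_trans (le_trans hb h16) (hmain x hxp hx2)
end

section
/- Let α > 1, λ ≥ 1 and τ ∈ (0,1). Let G = {(x,y) : -1 < x < 1, |x|^α < y < 1} and T = {(x,y) : x > 0, λx < y < τ}. Then the Hilbert (Busemann) area μ_G(T) of T with respect to the Hilbert geometry of G is finite. -/
open MeasureTheory
open scoped ENNReal Classical

/-- Hilbert Finsler norm `F_C(p,v) = (1/2)‖v‖(1/‖p-p⁻‖+1/‖p-p⁺‖) = (1/2)(1/t⁺+1/t⁻)`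
where `t⁺, t⁻` are the exit times of the line through `p` with direction `±v`. -/
noncomputable def hilbertFinsler {E : Type*} [NormedAddCommGroup E] [NormedSpace ℝ E]
    (C : Set E) (p v : E) : ℝ :=
  if v = 0 then 0 else
    (1 / 2) * (1 / sSup {t : ℝ | 0 < t ∧ p + t • v ∈ C}
      + 1 / sSup {t : ℝ | 0 < t ∧ p - t • v ∈ C})

/-- Unit ball of the Hilbert Finsler norm at `p`. -/
noncomputable def hilbertUnitBall {E : Type*} [NormedAddCommGroup E] [NormedSpace ℝ E]
    (C : Set E) (p : E) : Set E :=
  {v | hilbertFinsler C p v < 1}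

/-- Hilbert (Busemann) measure of a planar convex domain: density `ω₂ / Vol(B_C(p))`
with `ω₂ = π`. -/
noncomputable def hilbertMeasure (C : Set (ℝ × ℝ)) (A : Set (ℝ × ℝ)) : ℝ≥0∞ :=
  ∫⁻ p in A, ENNReal.ofReal Real.pi / volume (hilbertUnitBall C p)

/-!
Near the cusp `(0, 0)` of `G`, a point `(x, y)` of `T` has `x < y`, and `G` contains a box
around it of half-widths `≍ y ^ (1 / α)` horizontally and `≍ y` vertically, because the
height `x ^ α ≤ τ ^ (α - 1) y` of the boundary below it is a fixed fraction of `y`. The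
Hilbert unit ball at `(x, y)` contains half of that box, so the density of `μ_G` is
`≲ y ^ (-(1 + 1 / α))`, which on `T` is at most `x ^ (-a) y ^ (-a)` with `a = (1 + 1 / α) / 2 < 1`; the latter is
integrable on `(0, 1) × (0, τ)`.
-/

open Set

section HilbertGeometry

variable {E : Type*} [NormedAddCommGroup E] [NormedSpace ℝ E]

/-- `1 / sSup S` is `0` when `S` is unbounded, so the bound also holds then. -/
lemma one_div_sSup_le_inv_of_mem {S : Set ℝ} {t : ℝ} (ht : 0 < t) (htS : t ∈ S) :
    1 / sSup S ≤ t⁻¹ := by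
  by_cases hS : BddAbove S
  · rw [one_div]
    exact inv_anti₀ ht (le_csSup hS htS)
  · rw [Real.sSup_of_not_bddAbove hS, div_zero]
    positivity

lemma hilbertFinsler_le_inv_of_mem {C : Set E} {p v : E} {t : ℝ} (ht : 0 < t)
    (hadd : p + t • v ∈ C) (hsub : p - t • v ∈ C) : hilbertFinsler C p v ≤ t⁻¹ := by
  have badd := one_div_sSup_le_inv_of_mem (S := {t : ℝ | 0 < t ∧ p + t • v ∈ C}) ht ⟨ht, hadd⟩
  have bsub := one_div_sSup_le_inv_of_mem (S := {t : ℝ | 0 < t ∧ p - t • v ∈ C}) ht ⟨ht, hsub⟩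
  unfold hilbertFinsler
  split_ifs
  · positivity
  · linarith

lemma mem_hilbertUnitBall_of_add_two_smul_mem {C : Set E} {p v : E}
    (hadd : p + (2 : ℝ) • v ∈ C) (hsub : p - (2 : ℝ) • v ∈ C) : v ∈ hilbertUnitBall C p :=
  show hilbertFinsler C p v < 1 from
    (hilbertFinsler_le_inv_of_mem two_pos hadd hsub).trans_lt (by norm_num)

end HilbertGeometry

section PlanarBox

variable {C : Set (ℝ × ℝ)} {x y r s : ℝ}

lemma box_subset_hilbertUnitBall
    (hbox : Ioo (x - r) (x + r) ×ˢ Ioo (y - s) (y + s) ⊆ C) :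
    Ioo (-(r / 2)) (r / 2) ×ˢ Ioo (-(s / 2)) (s / 2) ⊆ hilbertUnitBall C (x, y) := by
  rintro ⟨u, w⟩ ⟨⟨hu₁, hu₂⟩, ⟨hw₁, hw₂⟩⟩
  apply mem_hilbertUnitBall_of_add_two_smul_mem
  · have e : (x, y) + (2 : ℝ) • (u, w) = (x + 2 * u, y + 2 * w) := by simp
    rw [e]
    exact hbox ⟨⟨by linarith, by linarith⟩, ⟨by linarith, by linarith⟩⟩
  · have e : (x, y) - (2 : ℝ) • (u, w) = (x - 2 * u, y - 2 * w) := by simp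
    rw [e]
    exact hbox ⟨⟨by linarith, by linarith⟩, ⟨by linarith, by linarith⟩⟩

lemma hilbertDensity_le_of_box (hr : 0 < r) (hs : 0 < s)
    (hbox : Ioo (x - r) (x + r) ×ˢ Ioo (y - s) (y + s) ⊆ C) :
    ENNReal.ofReal Real.pi / volume (hilbertUnitBall C (x, y))
      ≤ ENNReal.ofReal (Real.pi / (r * s)) := by
  have hvol : ENNReal.ofReal (r * s) ≤ volume (hilbertUnitBall C (x, y)) := by
    refine le_of_eq_of_le ?_ (measure_mono (box_subset_hilbertUnitBall hbox))
    rw [Measure.volume_eq_prod, Measure.prod_prod, Real.volume_Ioo, Real.volume_Ioo,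
      sub_neg_eq_add, sub_neg_eq_add, add_halves, add_halves, ENNReal.ofReal_mul hr.le]
  calc ENNReal.ofReal Real.pi / volume (hilbertUnitBall C (x, y))
      ≤ ENNReal.ofReal Real.pi / ENNReal.ofReal (r * s) := ENNReal.div_le_div_left hvol _
    _ = ENNReal.ofReal (Real.pi / (r * s)) := (ENNReal.ofReal_div_of_pos (by positivity)).symm

end PlanarBox

section Cusp

def cuspDomain (α : ℝ) : Set (ℝ × ℝ) :=
  {p : ℝ × ℝ | -1 < p.1 ∧ p.1 < 1 ∧ |p.1| ^ α < p.2 ∧ p.2 < 1}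

lemma rpow_le_rpow_sub_one_mul {α τ x y : ℝ} (hα : 1 ≤ α) (hx : 0 < x) (hxy : x ≤ y)
    (hyτ : y ≤ τ) : x ^ α ≤ τ ^ (α - 1) * y := by
  calc x ^ α = x ^ (α - 1) * x := by rw [← Real.rpow_add_one hx.ne', sub_add_cancel]
    _ ≤ τ ^ (α - 1) * y :=
      mul_le_mul (Real.rpow_le_rpow hx.le (hxy.trans hyτ) (by linarith)) hxy hx.le
        (Real.rpow_nonneg (hx.le.trans (hxy.trans hyτ)) _)

/-- Since `x ^ α ≤ β y` with `β = τ ^ (α - 1) < 1`, the box fits under the curve as soon as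
`x + c₁ y ^ (1 / α) ≤ ((1 + β) / 2 · y) ^ (1 / α)` and `c₂ ≤ (1 - β) / 2`. -/
lemma exists_box_subset_cuspDomain {α τ : ℝ} (hα : 1 < α) (hτ : τ ∈ Ioo 0 1) :
    ∃ c₁ c₂ : ℝ, 0 < c₁ ∧ 0 < c₂ ∧ ∀ x y : ℝ, 0 < x → x < y → y < τ →
      Ioo (x - c₁ * y ^ α⁻¹) (x + c₁ * y ^ α⁻¹) ×ˢ Ioo (y - c₂ * y) (y + c₂ * y)
        ⊆ cuspDomain α := by
  obtain ⟨hτ0, hτ1⟩ := hτ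
  have hα0 : 0 < α := by linarith
  set β := τ ^ (α - 1)
  have hβ0 : 0 < β := Real.rpow_pos_of_pos hτ0 _
  have hβ1 : β < 1 := Real.rpow_lt_one hτ0.le hτ1 (by linarith)
  set A := ((1 + β) / 2) ^ α⁻¹
  set B := β ^ α⁻¹
  have hBA : B < A := Real.rpow_lt_rpow hβ0.le (by linarith) (inv_pos.mpr hα0)
  refine ⟨A - B, (1 - β) * (1 - τ) / 2, by linarith, by nlinarith, ?_⟩
  rintro x y hx hxy hyτ ⟨u, w⟩ ⟨⟨hu₁, hu₂⟩, ⟨hw₁, hw₂⟩⟩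
  have hy : 0 < y := hx.trans hxy
  set Y := y ^ α⁻¹
  have hxB : x ≤ B * Y := by
    rw [← Real.mul_rpow hβ0.le hy.le, Real.le_rpow_inv_iff_of_pos hx.le (by positivity) hα0]
    exact rpow_le_rpow_sub_one_mul hα.le hx hxy.le hyτ.le
  have hu : |u| < ((1 + β) / 2 * y) ^ α⁻¹ := by
    rw [Real.mul_rpow (by positivity) hy.le, abs_lt]
    constructor <;> nlinarith
  have huα : |u| ^ α < (1 + β) / 2 * y :=
    (Real.lt_rpow_inv_iff_of_pos (abs_nonneg u) (by positivity) hα0).mp hu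
  have hwα : |u| ^ α < w := by nlinarith
  have hyβ : (1 - β) * y ≤ 1 := by nlinarith
  have hw1 : w < 1 := by nlinarith [mul_le_mul_of_nonneg_left hyβ (by linarith : 0 ≤ 1 - τ)]
  have hu1 : |u| < 1 := by
    by_contra! h
    linarith [Real.one_le_rpow h hα0.le]
  exact ⟨(abs_lt.mp hu1).1, (abs_lt.mp hu1).2, hwα, hw1⟩

lemma exists_hilbertDensity_cuspDomain_le {α τ : ℝ} (hα : 1 < α) (hτ : τ ∈ Ioo 0 1) :
    ∃ K : ℝ, ∀ x y : ℝ, 0 < x → x < y → y < τ →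
      ENNReal.ofReal Real.pi / volume (hilbertUnitBall (cuspDomain α) (x, y))
        ≤ ENNReal.ofReal K * (ENNReal.ofReal (x ^ (-((1 + α⁻¹) / 2)))
          * ENNReal.ofReal (y ^ (-((1 + α⁻¹) / 2)))) := by
  obtain ⟨c₁, c₂, hc₁, hc₂, hbox⟩ := exists_box_subset_cuspDomain hα hτ
  refine ⟨Real.pi / (c₁ * c₂), fun x y hx hxy hyτ => ?_⟩
  set a := (1 + α⁻¹) / 2 with ha
  have hy : 0 < y := hx.trans hxy
  have hya : y ^ α⁻¹ * y = y ^ a * y ^ a := by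
    rw [← Real.rpow_add hy, ← Real.rpow_add_one hy.ne', ha]
    ring_nf
  have hxa : x ^ a ≤ y ^ a := Real.rpow_le_rpow hx.le hxy.le (by positivity)
  have hreal : Real.pi / (c₁ * y ^ α⁻¹ * (c₂ * y))
      ≤ Real.pi / (c₁ * c₂) * (x ^ (-a) * y ^ (-a)) := by
    rw [Real.rpow_neg hx.le, Real.rpow_neg hy.le]
    calc Real.pi / (c₁ * y ^ α⁻¹ * (c₂ * y)) = Real.pi / (c₁ * c₂ * (y ^ a * y ^ a)) := by
          rw [← hya]; ring_nf
      _ ≤ Real.pi / (c₁ * c₂ * (x ^ a * y ^ a)) := by gcongr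
      _ = Real.pi / (c₁ * c₂) * ((x ^ a)⁻¹ * (y ^ a)⁻¹) := by field_simp
  calc ENNReal.ofReal Real.pi / volume (hilbertUnitBall (cuspDomain α) (x, y))
      ≤ ENNReal.ofReal (Real.pi / (c₁ * y ^ α⁻¹ * (c₂ * y))) :=
        hilbertDensity_le_of_box (by positivity) (by positivity) (hbox x y hx hxy hyτ)
    _ ≤ ENNReal.ofReal (Real.pi / (c₁ * c₂) * (x ^ (-a) * y ^ (-a))) :=
        ENNReal.ofReal_le_ofReal hreal
    _ = _ := by
        rw [ENNReal.ofReal_mul (by positivity), ENNReal.ofReal_mul (by positivity)]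

end Cusp

lemma setLIntegral_Ioo_prod_rpow_mul_rpow_lt_top {s c d : ℝ} (hs : -1 < s) (hc : 0 < c)
    (hd : 0 < d) :
    ∫⁻ p in Ioo 0 c ×ˢ Ioo 0 d, ENNReal.ofReal (p.1 ^ s) * ENNReal.ofReal (p.2 ^ s) < ⊤ := by
  have hmeas : Measurable fun t : ℝ => ENNReal.ofReal (t ^ s) := by fun_prop
  have hfin : ∀ {t : ℝ}, 0 < t → ∫⁻ x in Ioo 0 t, ENNReal.ofReal (x ^ s) < ⊤ := fun ht =>
    ((intervalIntegral.integrableOn_Ioo_rpow_iff ht).mpr hs).lintegral_lt_top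
  rw [Measure.volume_eq_prod, ← Measure.prod_restrict,
    lintegral_prod_mul hmeas.aemeasurable hmeas.aemeasurable]
  exact ENNReal.mul_lt_top (hfin hc) (hfin hd)

theorem stmt_11 (α lam τ : ℝ) (hα : 1 < α) (hlam : 1 ≤ lam) (hτ : τ ∈ Set.Ioo (0 : ℝ) 1) :
    hilbertMeasure {p : ℝ × ℝ | -1 < p.1 ∧ p.1 < 1 ∧ |p.1| ^ α < p.2 ∧ p.2 < 1}
      {p : ℝ × ℝ | 0 < p.1 ∧ lam * p.1 < p.2 ∧ p.2 < τ} < ⊤ := by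
  obtain ⟨K, hK⟩ := exists_hilbertDensity_cuspDomain_le hα hτ
  have ha : -1 < -((1 + α⁻¹) / 2) := by linarith [inv_lt_one_of_one_lt₀ hα]
  set a := (1 + α⁻¹) / 2
  have hxy : ∀ p ∈ {p : ℝ × ℝ | 0 < p.1 ∧ lam * p.1 < p.2 ∧ p.2 < τ}, p.1 < p.2 :=
    fun p ⟨hx, hlx, _⟩ => by nlinarith
  calc hilbertMeasure (cuspDomain α) {p : ℝ × ℝ | 0 < p.1 ∧ lam * p.1 < p.2 ∧ p.2 < τ}
      ≤ ∫⁻ p in {p : ℝ × ℝ | 0 < p.1 ∧ lam * p.1 < p.2 ∧ p.2 < τ},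
          ENNReal.ofReal K * (ENNReal.ofReal (p.1 ^ (-a)) * ENNReal.ofReal (p.2 ^ (-a))) :=
        setLIntegral_mono (by fun_prop) fun p hp => hK p.1 p.2 hp.1 (hxy p hp) hp.2.2
    _ ≤ ∫⁻ p in Ioo 0 1 ×ˢ Ioo 0 τ,
          ENNReal.ofReal K * (ENNReal.ofReal (p.1 ^ (-a)) * ENNReal.ofReal (p.2 ^ (-a))) :=
        lintegral_mono_set fun p hp =>
          ⟨⟨hp.1, by linarith [hxy p hp, hτ.2, hp.2.2]⟩, ⟨hp.1.trans (hxy p hp), hp.2.2⟩⟩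
    _ < ⊤ := by
        rw [lintegral_const_mul' _ _ ENNReal.ofReal_ne_top]
        exact ENNReal.mul_lt_top ENNReal.ofReal_lt_top
          (setLIntegral_Ioo_prod_rpow_mul_rpow_lt_top ha one_pos hτ.1)
end

section
/- Let G = {(x,y) ∈ ℝ² : -1 < x < 1 and |x|^α < y < 1} with α > 1, and let p = (x,y) ∈ G with x > 0. Then the vectors v₁ = ((y^(2/α) - x²)/y^(1/α), 0) and v₂ = (0, 2(1-y)(y - x^α)/(1 - x^α)) lie on the boundary of the Hilbert unit ball B_G(p) = {v : F_G(p,v) < 1}, and consequently the Euclidean area of B_G(p) satisfies Vol(B_G(p)) ≥ 4·(1-y)·(y - x^α)·(y^(2/α) - x²) / (y^(1/α)·(1 - x^α)). -/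
open MeasureTheory
open scoped ENNReal Classical

/-!
For a convex set `C` that is a neighbourhood of `p`, the exit time `sSup {t > 0 | p + t v ∈ C}`
is the reciprocal of the gauge of `C - p` at `v`, so `hilbertFinsler C p` is the symmetrisation of
a gauge and hence a seminorm. Its open unit ball therefore contains the open rhombus spanned by
any two coordinate vectors of norm at most `1`, and this rhombus has area `2 w h`. For the domain
`G` the exit points from `(x, y)` are explicit: horizontally at `|u| = y ^ (1 / α)`, vertically at
heights `x ^ α` and `1`; with these one checks that `v₁` and `v₂` have norm exactly `1`.
-/

open Set Topology

-- Also true in the junk cases `T = ∅` and `T` unbounded, where both sides are `0`.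
theorem Real.sInf_inv_eq_inv_sSup {T : Set ℝ} (hT : T ⊆ Ioi 0) : sInf T⁻¹ = (sSup T)⁻¹ := by
  rcases T.eq_empty_or_nonempty with rfl | hne
  · simp
  have hinv : T⁻¹ ⊆ Ioi 0 := fun r hr => mem_Ioi.2 (inv_pos.mp (hT hr))
  by_cases hbdd : BddAbove T
  · have hS : 0 < sSup T := (hT hne.some_mem).trans_le (le_csSup hbdd hne.some_mem)
    refine IsGLB.csInf_eq ⟨fun r hr => ?_, fun b hb => ?_⟩ hne.inv
    · rw [inv_le_comm₀ hS (hinv hr)]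
      exact le_csSup hbdd hr
    · rcases le_or_gt b 0 with hb0 | hb0
      · exact hb0.trans (inv_pos.2 hS).le
      · rw [le_inv_comm₀ hb0 hS]
        refine csSup_le hne fun t ht => ?_
        rw [le_inv_comm₀ (hT ht) hb0]
        exact hb (by simpa using ht)
  · rw [Real.sSup_of_not_bddAbove hbdd, inv_zero]
    refine le_antisymm (le_of_forall_pos_le_add fun ε hε => ?_)
      (Real.sInf_nonneg fun r hr => (hinv hr).le)
    obtain ⟨t, ht, hlt⟩ := not_bddAbove_iff.1 hbdd ε⁻¹
    have : t⁻¹ < ε := (inv_lt_comm₀ (hT ht) hε).2 hlt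
    rw [zero_add]
    exact (csInf_le ⟨0, fun r hr => (hinv hr).le⟩ (by simpa using ht)).trans this.le

section HilbertFinsler

variable {E : Type*} [NormedAddCommGroup E] [NormedSpace ℝ E]

theorem one_div_sSup_eq_gauge (C : Set E) (p v : E) :
    1 / sSup {t : ℝ | 0 < t ∧ p + t • v ∈ C} = gauge ((p + ·) ⁻¹' C) v := by
  rw [gauge_def', one_div, ← Real.sInf_inv_eq_inv_sSup fun t ht => ht.1]
  congr 1
  ext r
  simp

theorem hilbertFinsler_eq_gauge (C : Set E) (p v : E) :
    hilbertFinsler C p v = (gauge ((p + ·) ⁻¹' C) v + gauge ((p + ·) ⁻¹' C) (-v)) / 2 := by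
  by_cases hv : v = 0
  · simp [hilbertFinsler, hv, gauge_zero]
  · simp only [hilbertFinsler, if_neg hv, sub_eq_add_neg, ← smul_neg,
      one_div_sSup_eq_gauge]
    ring

theorem hilbertFinsler_smul (C : Set E) (p : E) (a : ℝ) (v : E) :
    hilbertFinsler C p (a • v) = |a| * hilbertFinsler C p v := by
  have hgauge : ∀ {b : ℝ}, 0 ≤ b → ∀ w,
      gauge ((p + ·) ⁻¹' C) (b • w) = b * gauge ((p + ·) ⁻¹' C) w :=
    fun hb w => gauge_smul_of_nonneg hb w
  rcases le_total 0 a with ha | ha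
  · rw [hilbertFinsler_eq_gauge, hilbertFinsler_eq_gauge, ← smul_neg, hgauge ha, hgauge ha,
      abs_of_nonneg ha]
    ring
  · rw [hilbertFinsler_eq_gauge, hilbertFinsler_eq_gauge, ← neg_smul, ← neg_smul_neg a v,
      hgauge (neg_nonneg.2 ha), hgauge (neg_nonneg.2 ha), abs_of_nonpos ha]
    ring

theorem hilbertFinsler_add_le {C : Set E} (hC : Convex ℝ C) {p : E} (hp : C ∈ 𝓝 p) (u v : E) :
    hilbertFinsler C p (u + v) ≤ hilbertFinsler C p u + hilbertFinsler C p v := by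
  have hK : Convex ℝ ((p + ·) ⁻¹' C) := hC.translate_preimage_right p
  have hK₀ : Absorbent ℝ ((p + ·) ⁻¹' C) :=
    absorbent_nhds_zero <|
      (continuous_const_add p).continuousAt.preimage_mem_nhds (by simpa using hp)
  simp only [hilbertFinsler_eq_gauge, neg_add]
  linarith [gauge_add_le hK hK₀ u v, gauge_add_le hK hK₀ (-u) (-v)]

theorem hilbertFinsler_of_forall_add_smul_mem_iff {C : Set E} {p v : E} (hv : v ≠ 0) {a b : ℝ}
    (ha : a < 0) (hb : 0 < b) (hline : ∀ t : ℝ, p + t • v ∈ C ↔ t ∈ Ioo a b) :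
    hilbertFinsler C p v = (1 / b - 1 / a) / 2 := by
  have hfwd : {t : ℝ | 0 < t ∧ p + t • v ∈ C} = Ioo 0 b := by
    ext t
    simp only [mem_ofPred_eq, hline, mem_Ioo]
    exact ⟨fun ⟨h₀, _, h₂⟩ => ⟨h₀, by linarith⟩, fun ⟨h₀, h₁⟩ => ⟨h₀, by linarith, by linarith⟩⟩
  have hbwd : {t : ℝ | 0 < t ∧ p - t • v ∈ C} = Ioo 0 (-a) := by
    ext t
    simp only [mem_ofPred_eq, sub_eq_add_neg, ← neg_smul, hline, mem_Ioo]
    exact ⟨fun ⟨h₀, _, h₂⟩ => ⟨h₀, by linarith⟩, fun ⟨h₀, h₁⟩ => ⟨h₀, by linarith, by linarith⟩⟩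
  rw [hilbertFinsler, if_neg hv, hfwd, hbwd, csSup_Ioo hb, csSup_Ioo (neg_pos.2 ha)]
  ring

end HilbertFinsler

def rhombus (w h : ℝ) : Set (ℝ × ℝ) :=
  {v | |v.1| / w + |v.2| / h < 1}

theorem rhombus_subset_hilbertUnitBall {C : Set (ℝ × ℝ)} (hC : Convex ℝ C) {p : ℝ × ℝ}
    (hp : C ∈ 𝓝 p) {w h : ℝ} (hw : 0 < w) (hh : 0 < h)
    (h₁ : hilbertFinsler C p (w, 0) ≤ 1) (h₂ : hilbertFinsler C p (0, h) ≤ 1) :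
    rhombus w h ⊆ hilbertUnitBall C p := by
  intro v hv
  have hsplit : v = (v.1 / w) • ((w, 0) : ℝ × ℝ) + (v.2 / h) • ((0, h) : ℝ × ℝ) := by
    ext <;> simp [hw.ne', hh.ne']
  have hv' : |v.1 / w| + |v.2 / h| < 1 := by
    simpa [rhombus, abs_div, abs_of_pos hw, abs_of_pos hh] using hv
  show hilbertFinsler C p v < 1
  calc hilbertFinsler C p v
      ≤ |v.1 / w| * hilbertFinsler C p (w, 0) + |v.2 / h| * hilbertFinsler C p (0, h) := by
        rw [← hilbertFinsler_smul, ← hilbertFinsler_smul]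
        nth_rw 1 [hsplit]
        exact hilbertFinsler_add_le hC hp _ _
    _ ≤ |v.1 / w| + |v.2 / h| := by
        gcongr <;> exact mul_le_of_le_one_right (abs_nonneg _) ‹_›
    _ < 1 := hv'

theorem volume_abs_add_abs_lt_one : volume {v : ℝ × ℝ | |v.1| + |v.2| < 1} = 2 := by
  rw [← (volume_preserving_finTwoArrow ℝ).measure_preimage_equiv]
  have hset : MeasurableEquiv.finTwoArrow ⁻¹' {v : ℝ × ℝ | |v.1| + |v.2| < 1}
      = {x : Fin 2 → ℝ | ∑ i, |x i| ^ (1 : ℝ) < 1} := by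
    ext x
    simp [Fin.sum_univ_two]
  have hΓ : Real.Gamma 3 = 2 := by
    rw [show (3 : ℝ) = 2 + 1 by norm_num, Real.Gamma_add_one two_ne_zero, Real.Gamma_two]
    norm_num
  rw [hset, volume_sum_rpow_lt_one (Fin 2) le_rfl]
  norm_num [Real.Gamma_two, hΓ]

theorem volume_rhombus {w h : ℝ} (hw : 0 < w) (hh : 0 < h) :
    volume (rhombus w h) = ENNReal.ofReal (2 * w * h) := by
  have hset : rhombus w h
      = Prod.map (w⁻¹ * ·) (h⁻¹ * ·) ⁻¹' {v : ℝ × ℝ | |v.1| + |v.2| < 1} := by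
    ext v
    simp [rhombus, abs_mul, abs_of_pos hw, abs_of_pos hh, div_eq_inv_mul]
  have hmeas : MeasurableSet {v : ℝ × ℝ | |v.1| + |v.2| < 1} :=
    measurableSet_lt (by fun_prop) measurable_const
  rw [hset, ← Measure.map_apply (by fun_prop) hmeas, Measure.volume_eq_prod,
    ← Measure.map_prod_map _ _ (by fun_prop) (by fun_prop),
    Real.map_volume_mul_left (inv_ne_zero hw.ne'), Real.map_volume_mul_left (inv_ne_zero hh.ne'),
    Measure.prod_smul_left, Measure.prod_smul_right, ← Measure.volume_eq_prod]
  simp only [Measure.smul_apply, volume_abs_add_abs_lt_one, smul_eq_mul, inv_inv,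
    abs_of_pos hw, abs_of_pos hh]
  rw [ENNReal.ofReal_mul (by positivity), ENNReal.ofReal_mul (by norm_num)]
  norm_num
  ring

theorem Real.lt_rpow_one_div_of_rpow_lt {α x y : ℝ} (hα : 0 < α) (hx : 0 ≤ x) (hxy : x ^ α < y) :
    x < y ^ (1 / α) := by
  rw [one_div, Real.lt_rpow_inv_iff_of_pos hx ((Real.rpow_nonneg hx α).trans hxy.le) hα]
  exact hxy

theorem Real.rpow_two_div_eq_sq {y : ℝ} (hy : 0 ≤ y) (α : ℝ) :
    y ^ (2 / α) = (y ^ (1 / α)) ^ 2 := by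
  rw [← Real.rpow_natCast, ← Real.rpow_mul hy]
  ring_nf

def rpowDomain (α : ℝ) : Set (ℝ × ℝ) :=
  {p | -1 < p.1 ∧ p.1 < 1 ∧ |p.1| ^ α < p.2 ∧ p.2 < 1}

theorem convexOn_abs_rpow {α : ℝ} (hα : 1 ≤ α) : ConvexOn ℝ univ fun u : ℝ => |u| ^ α := by
  refine ⟨convex_univ, fun u _ v _ a b ha hb hab => ?_⟩
  calc |a • u + b • v| ^ α ≤ (a • |u| + b • |v|) ^ α := by
        refine Real.rpow_le_rpow (abs_nonneg _) ?_ (by linarith)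
        simpa [abs_mul, abs_of_nonneg ha, abs_of_nonneg hb] using abs_add_le (a * u) (b * v)
    _ ≤ a • |u| ^ α + b • |v| ^ α :=
        (convexOn_rpow hα).2 (abs_nonneg u) (abs_nonneg v) ha hb hab

theorem convex_rpowDomain {α : ℝ} (hα : 1 ≤ α) : Convex ℝ (rpowDomain α) := by
  have h : rpowDomain α = (Ioo (-1) 1 ×ˢ Iio 1) ∩ {p | p.1 ∈ univ ∧ |p.1| ^ α < p.2} := by
    ext p
    simp only [rpowDomain, mem_inter_iff, mem_prod, mem_Ioo, mem_Iio, mem_ofPred_eq, mem_univ,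
      true_and]
    tauto
  rw [h]
  exact ((convex_Ioo _ _).prod (convex_Iio _)).inter (convexOn_abs_rpow hα).convex_strict_epigraph

theorem isOpen_rpowDomain {α : ℝ} (hα : 0 ≤ α) : IsOpen (rpowDomain α) := by
  have hf : Continuous fun p : ℝ × ℝ => |p.1| ^ α :=
    continuous_fst.abs.rpow_const fun _ => Or.inr hα
  exact (isOpen_lt continuous_const continuous_fst).inter <|
    (isOpen_lt continuous_fst continuous_const).inter <|
    (isOpen_lt hf continuous_snd).inter (isOpen_lt continuous_snd continuous_const)

theorem mem_rpowDomain_horizontal_iff {α y : ℝ} (hα : 0 < α) (hy₀ : 0 < y) (hy₁ : y < 1)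
    (u : ℝ) : (u, y) ∈ rpowDomain α ↔ |u| < y ^ (1 / α) := by
  have hq : y ^ (1 / α) < 1 := Real.rpow_lt_one hy₀.le hy₁ (by positivity)
  rw [one_div] at hq ⊢
  simp only [rpowDomain, mem_ofPred_eq, hy₁, and_true]
  rw [← Real.lt_rpow_inv_iff_of_pos (abs_nonneg u) hy₀.le hα]
  exact ⟨fun h => h.2.2, fun h => ⟨(abs_lt.1 (h.trans hq)).1, (abs_lt.1 (h.trans hq)).2, h⟩⟩

theorem mem_rpowDomain_vertical_iff {α x : ℝ} (hx₀ : 0 ≤ x) (hx₁ : x < 1) (s : ℝ) :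
    (x, s) ∈ rpowDomain α ↔ x ^ α < s ∧ s < 1 := by
  simp [rpowDomain, abs_of_nonneg hx₀, hx₁, show -1 < x by linarith]

theorem hilbertFinsler_rpowDomain_horizontal {α x y : ℝ} (hα : 0 < α) (hx : 0 ≤ x)
    (hxy : x ^ α < y) (hy₁ : y < 1) :
    hilbertFinsler (rpowDomain α) (x, y) (((y ^ (2 / α) - x ^ (2 : ℕ)) / y ^ (1 / α), 0)) = 1 := by
  have hy₀ : 0 < y := (Real.rpow_nonneg hx α).trans_lt hxy
  have hxq := Real.lt_rpow_one_div_of_rpow_lt hα hx hxy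
  rw [Real.rpow_two_div_eq_sq hy₀.le]
  set q := y ^ (1 / α)
  have hq : 0 < q := by positivity
  set c := (q ^ 2 - x ^ 2) / q
  have hc : 0 < c := div_pos (by nlinarith) hq
  rw [hilbertFinsler_of_forall_add_smul_mem_iff (a := (-q - x) / c) (b := (q - x) / c)]
  · have : q - x ≠ 0 := by linarith
    have : -q - x ≠ 0 := by linarith
    simp only [c]
    field_simp
    ring
  · simpa using hc.ne'
  · exact div_neg_of_neg_of_pos (by linarith) hc
  · exact div_pos (by linarith) hc
  · intro t
    rw [show ((x, y) : ℝ × ℝ) + t • (c, 0) = (x + t * c, y) by simp,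
      mem_rpowDomain_horizontal_iff hα hy₀ hy₁, abs_lt, mem_Ioo, div_lt_iff₀ hc, lt_div_iff₀ hc]
    constructor <;> rintro ⟨h₁, h₂⟩ <;> constructor <;> linarith

theorem hilbertFinsler_rpowDomain_vertical {α x y : ℝ} (hx₀ : 0 ≤ x) (hx₁ : x < 1)
    (hxy : x ^ α < y) (hy₁ : y < 1) :
    hilbertFinsler (rpowDomain α) (x, y) ((0, 2 * (1 - y) * (y - x ^ α) / (1 - x ^ α))) = 1 := by
  set d := 2 * (1 - y) * (y - x ^ α) / (1 - x ^ α)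
  have hd : 0 < d := div_pos (by nlinarith) (by linarith)
  rw [hilbertFinsler_of_forall_add_smul_mem_iff (a := (x ^ α - y) / d) (b := (1 - y) / d)]
  · have : 1 - y ≠ 0 := by linarith
    have : x ^ α - y ≠ 0 := by linarith
    have : 1 - x ^ α ≠ 0 := by linarith
    simp only [d]
    field_simp
    ring
  · simpa using hd.ne'
  · exact div_neg_of_neg_of_pos (by linarith) hd
  · exact div_pos (by linarith) hd
  · intro t
    rw [show ((x, y) : ℝ × ℝ) + t • (0, d) = (x, y + t * d) by simp,
      mem_rpowDomain_vertical_iff hx₀ hx₁, mem_Ioo, div_lt_iff₀ hd, lt_div_iff₀ hd]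
    constructor <;> rintro ⟨h₁, h₂⟩ <;> constructor <;> linarith

theorem stmt_12 (α : ℝ) (hα : 1 < α) (x y : ℝ)
    (hp : ((x, y) : ℝ × ℝ) ∈ {p : ℝ × ℝ | -1 < p.1 ∧ p.1 < 1 ∧ |p.1| ^ α < p.2 ∧ p.2 < 1})
    (hx : 0 < x) :
    hilbertFinsler {p : ℝ × ℝ | -1 < p.1 ∧ p.1 < 1 ∧ |p.1| ^ α < p.2 ∧ p.2 < 1}
        (x, y) (((y ^ (2 / α) - x ^ (2 : ℕ)) / y ^ (1 / α), 0)) = 1 ∧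
    hilbertFinsler {p : ℝ × ℝ | -1 < p.1 ∧ p.1 < 1 ∧ |p.1| ^ α < p.2 ∧ p.2 < 1}
        (x, y) ((0, 2 * (1 - y) * (y - x ^ α) / (1 - x ^ α))) = 1 ∧
    ENNReal.ofReal
        (4 * (1 - y) * (y - x ^ α) * (y ^ (2 / α) - x ^ (2 : ℕ)) / (y ^ (1 / α) * (1 - x ^ α)))
      ≤ volume (hilbertUnitBall
          {p : ℝ × ℝ | -1 < p.1 ∧ p.1 < 1 ∧ |p.1| ^ α < p.2 ∧ p.2 < 1} (x, y)) := by
  obtain ⟨-, hx₁, hxy, hy₁⟩ : -1 < x ∧ x < 1 ∧ |x| ^ α < y ∧ y < 1 := id hp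
  rw [abs_of_pos hx] at hxy
  have hy₀ : 0 < y := (Real.rpow_nonneg hx.le α).trans_lt hxy
  have h₁ := hilbertFinsler_rpowDomain_horizontal (by linarith) hx.le hxy hy₁
  have h₂ := hilbertFinsler_rpowDomain_vertical hx.le hx₁ hxy hy₁
  refine ⟨h₁, h₂, ?_⟩
  have hw : 0 < (y ^ (2 / α) - x ^ (2 : ℕ)) / y ^ (1 / α) := by
    have := Real.lt_rpow_one_div_of_rpow_lt (by linarith) hx.le hxy
    rw [Real.rpow_two_div_eq_sq hy₀.le]
    exact div_pos (by nlinarith) (by positivity)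
  have hh : 0 < 2 * (1 - y) * (y - x ^ α) / (1 - x ^ α) := div_pos (by nlinarith) (by linarith)
  calc ENNReal.ofReal _
      = volume (rhombus ((y ^ (2 / α) - x ^ (2 : ℕ)) / y ^ (1 / α))
          (2 * (1 - y) * (y - x ^ α) / (1 - x ^ α))) := by
        rw [volume_rhombus hw hh]
        congr 1
        field_simp
        ring
    _ ≤ _ := measure_mono <| rhombus_subset_hilbertUnitBall (convex_rpowDomain hα.le)
        ((isOpen_rpowDomain (by linarith)).mem_nhds hp) hw hh h₁.le h₂.le
end
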